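/- arXiv:1004.0323 — 2 statements merged into one kernel-verified Lean document; each statement's English description precedes it below -/
import Mathlib

section
/- Let f be a +proper closed relation on a locally compact, σ-compact Hausdorff space X, let X̂ be a compact Hausdorff space containing X as a dense open subspace, and let f̂ be the closure of f in X̂ × X̂. Assume the compactification is almost dynamic: (1_{X̂} ∪ 𝒢f̂) ∩ (X × X) = 1_X ∪ 𝒢f. Then: (a) if C ⊆ X is compact and 𝒢f(C) ∩ (𝒢f)⁻¹(C) ⊆ C, then 𝒢f̂(C) ∩ (𝒢f̂)⁻¹(C) ⊆ C; (b) if C ⊆ X is compact and 𝒢f(C) ⊆ C, then 𝒢f̂(C) ⊆ C. -/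
/-- The image of a set `A` under a relation `f ⊆ X × Y`. -/
def relImage {X Y : Type*} (f : Set (X × Y)) (A : Set X) : Set Y :=
  {y | ∃ x ∈ A, (x, y) ∈ f}

/-- The reverse (inverse) relation of `f ⊆ X × Y`. -/
def relInv {X Y : Type*} (f : Set (X × Y)) : Set (Y × X) :=
  {p | (p.2, p.1) ∈ f}

/-- Composition of relations: `relComp g f = g ∘ f` (first `f`, then `g`). -/
def relComp {X Y Z : Type*} (g : Set (Y × Z)) (f : Set (X × Y)) : Set (X × Z) :=
  {p | ∃ y, (p.1, y) ∈ f ∧ (y, p.2) ∈ g}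

/-- A relation on `X` is transitive. -/
def RelTrans {X : Type*} (f : Set (X × X)) : Prop :=
  ∀ x y z : X, (x, y) ∈ f → (y, z) ∈ f → (x, z) ∈ f

/-- `gRel f` is the smallest closed transitive relation containing `f`:
the intersection of all closed transitive relations containing `f`. -/
def gRel {X : Type*} [TopologicalSpace X] (f : Set (X × X)) : Set (X × X) :=
  ⋂₀ {g : Set (X × X) | f ⊆ g ∧ IsClosed g ∧ RelTrans g}

/-!
Points of `X` reached from `C` by `𝒢f̂` are controlled directly by the almost dynamic
hypothesis; the work is to show that a `𝒢f̂`-arrow from `C` to a point at infinity first passes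
through a point of `X` outside `C`. Take a compact `K ⊇ C` with interior `U ⊇ C` and put
`L = K ∪ f(K)`. By +properness, `f̂`-arrows starting in `U` end in `L`. The arrows of `𝒢f̂` that
start outside `U`, end in `L`, or pass through the compact shell `L \ U` form a closed transitive
relation containing `f̂`, hence all of `𝒢f̂`; so an arrow from `C` to infinity meets the shell.
-/

open Set Topology

section Relations

variable {Y : Type*} [TopologicalSpace Y]

lemma subset_gRel (F : Set (Y × Y)) : F ⊆ gRel F :=
  fun _ hp => mem_sInter.2 fun _ hg => hg.1 hp

lemma gRel_subset {F G : Set (Y × Y)} (hFG : F ⊆ G) (hG : IsClosed G) (hGt : RelTrans G) :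
    gRel F ⊆ G :=
  sInter_subset_of_mem ⟨hFG, hG, hGt⟩

lemma isClosed_gRel (F : Set (Y × Y)) : IsClosed (gRel F) :=
  isClosed_sInter fun _ hg => hg.2.1

lemma relTrans_gRel (F : Set (Y × Y)) : RelTrans (gRel F) := fun x y z hxy hyz =>
  mem_sInter.2 fun g hg => hg.2.2 x y z (mem_sInter.1 hxy g hg) (mem_sInter.1 hyz g hg)

lemma isClosed_relComp {X Z : Type*} [TopologicalSpace X] [TopologicalSpace Z] [CompactSpace Y]
    {f : Set (X × Y)} {g : Set (Y × Z)} (hf : IsClosed f) (hg : IsClosed g) :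
    IsClosed (relComp g f) := by
  have h : relComp g f = Prod.fst '' {x : (X × Z) × Y | (x.1.1, x.2) ∈ f ∧ (x.2, x.1.2) ∈ g} := by
    ext ⟨x, z⟩
    exact ⟨fun ⟨y, hxy, hyz⟩ => ⟨((x, z), y), ⟨hxy, hyz⟩, rfl⟩,
      fun ⟨_, ⟨hxy, hyz⟩, h⟩ => h ▸ ⟨_, hxy, hyz⟩⟩
  rw [h]
  exact isClosedMap_fst_of_compactSpace _
    ((hf.preimage (by fun_prop)).inter (hg.preimage (by fun_prop)))

lemma exists_mem_diff_of_mem_gRel [CompactSpace Y] {F : Set (Y × Y)} {W L : Set Y}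
    (hW : IsOpen W) (hL : IsClosed L) (hFL : ∀ p q, (p, q) ∈ F → p ∈ W → q ∈ L)
    {p r : Y} (hp : p ∈ W) (hr : r ∉ L) (hpr : (p, r) ∈ gRel F) :
    ∃ m ∈ L \ W, (p, m) ∈ gRel F ∧ (m, r) ∈ gRel F := by
  set Q := relComp (gRel F) (gRel F ∩ Prod.snd ⁻¹' (L \ W))
  set T := gRel F ∩ ((Prod.fst ⁻¹' W)ᶜ ∪ Prod.snd ⁻¹' L ∪ Q)
  have hT : IsClosed T :=
    (isClosed_gRel F).inter <|
      ((hW.preimage continuous_fst).isClosed_compl.union (hL.preimage continuous_snd)).union <|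
        isClosed_relComp ((isClosed_gRel F).inter ((hL.sdiff hW).preimage continuous_snd))
          (isClosed_gRel F)
  have hFT : F ⊆ T := fun ⟨a, b⟩ hab =>
    ⟨subset_gRel F hab, by_cases (fun ha : a ∈ W => Or.inl (Or.inr (hFL a b hab ha)))
      (fun ha => Or.inl (Or.inl ha))⟩
  have hTt : RelTrans T := by
    intro a b c ⟨hab, hab'⟩ ⟨hbc, hbc'⟩
    refine ⟨relTrans_gRel F a b c hab hbc, ?_⟩
    by_cases ha : a ∈ W
    · by_cases hc : c ∈ L
      · exact Or.inl (Or.inr hc)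
      right
      rcases hab' with (ha' | hb) | ⟨m, ⟨ham, hm⟩, hmb⟩
      · exact absurd ha ha'
      · by_cases hbW : b ∈ W
        · rcases hbc' with (hb' | hc') | ⟨m, ⟨hbm, hm⟩, hmc⟩
          · exact absurd hbW hb'
          · exact absurd hc' hc
          · exact ⟨m, ⟨relTrans_gRel F a b m hab hbm, hm⟩, hmc⟩
        · exact ⟨b, ⟨hab, hb, hbW⟩, hbc⟩
      · exact ⟨m, ⟨ham, hm⟩, relTrans_gRel F m b c hmb hbc⟩
    · exact Or.inl (Or.inl ha)
  rcases (gRel_subset hFT hT hTt hpr).2 with (hp' | hr') | ⟨m, ⟨hpm, hm⟩, hmr⟩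
  · exact absurd hp hp'
  · exact absurd hr' hr
  · exact ⟨m, hm, hpm, hmr⟩

end Relations

section Compactification

variable {X Xh : Type*} [TopologicalSpace X] [TopologicalSpace Xh] {j : X → Xh}

lemma mem_image_relImage_of_mem_closure [T2Space Xh] (hjc : Continuous j)
    (hji : Function.Injective j) {f : Set (X × X)} {A : Set X}
    (hfA : IsCompact (relImage f A)) {V : Set Xh} (hV : IsOpen V) (hVA : V ⊆ j '' A)
    {p q : Xh} (hpq : (p, q) ∈ closure (Prod.map j j '' f)) (hp : p ∈ V) :
    q ∈ j '' relImage f A := by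
  have hsub : V ×ˢ univ ∩ Prod.map j j '' f ⊆ (univ : Set Xh) ×ˢ (j '' relImage f A) := by
    rintro _ ⟨⟨hxV, -⟩, ⟨x, y⟩, hxy, rfl⟩
    obtain ⟨a, ha, hax⟩ := hVA hxV
    exact ⟨trivial, y, ⟨x, hji hax ▸ ha, hxy⟩, rfl⟩
  have hclosed : IsClosed ((univ : Set Xh) ×ˢ (j '' relImage f A)) :=
    isClosed_univ.prod (hfA.image hjc).isClosed
  exact (hclosed.closure_subset_iff.2 hsub
    ((hV.prod isOpen_univ).inter_closure ⟨⟨hp, trivial⟩, hpq⟩)).2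

lemma exists_notMem_of_mem_gRel_closure [WeaklyLocallyCompactSpace X] [CompactSpace Xh]
    [T2Space Xh] (hj : IsEmbedding j) (hopen : IsOpen (range j)) {f : Set (X × X)}
    (hplus : ∀ A : Set X, IsCompact A → IsCompact (relImage f A))
    {C : Set X} (hC : IsCompact C) {c : X} (hc : c ∈ C) {z : Xh} (hz : z ∉ range j)
    (hcz : (j c, z) ∈ gRel (closure (Prod.map j j '' f))) :
    ∃ w ∉ C, (j c, j w) ∈ gRel (closure (Prod.map j j '' f)) ∧
      (j w, z) ∈ gRel (closure (Prod.map j j '' f)) := by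
  obtain ⟨K, hK, hCK⟩ := exists_compact_superset hC
  have hU : IsOpen (j '' interior K) := hj.isInducing.isOpenMap hopen _ isOpen_interior
  have hL : IsClosed (j '' (K ∪ relImage f K)) :=
    ((hK.union (hplus K hK)).image hj.continuous).isClosed
  have hFL : ∀ p q, (p, q) ∈ closure (Prod.map j j '' f) → p ∈ j '' interior K →
      q ∈ j '' (K ∪ relImage f K) := fun p q hpq hp =>
    image_mono subset_union_right <| mem_image_relImage_of_mem_closure hj.continuous
      hj.injective (hplus K hK) hU (image_mono interior_subset) hpq hp
  obtain ⟨_, ⟨⟨w, -, rfl⟩, hwU⟩, hcw, hwz⟩ := exists_mem_diff_of_mem_gRel hU hL hFL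
    (mem_image_of_mem j (hCK hc)) (fun hzL => hz (image_subset_range _ _ hzL)) hcz
  exact ⟨w, fun hw => hwU (mem_image_of_mem j (hCK hw)), hcw, hwz⟩

end Compactification

theorem almostDynamic_unrevisited_and_invariant_general
    {X : Type*} [TopologicalSpace X] [LocallyCompactSpace X]
    {Xh : Type*} [TopologicalSpace Xh] [CompactSpace Xh] [T2Space Xh]
    (j : X → Xh) (hj : Topology.IsEmbedding j)
    (hopen : IsOpen (Set.range j))
    (f : Set (X × X))
    (hplus : ∀ A : Set X, IsCompact A → IsCompact (relImage f A))
    (fh : Set (Xh × Xh)) (hfh : fh = closure (Prod.map j j '' f))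
    (had : ∀ x y : X,
      ((j x, j y) ∈ Set.diagonal Xh ∪ gRel fh) ↔ ((x, y) ∈ Set.diagonal X ∪ gRel f)) :
    (∀ C : Set X, IsCompact C →
      relImage (gRel f) C ∩ relImage (relInv (gRel f)) C ⊆ C →
      relImage (gRel fh) (j '' C) ∩ relImage (relInv (gRel fh)) (j '' C) ⊆ j '' C) ∧
    (∀ C : Set X, IsCompact C → relImage (gRel f) C ⊆ C →
      relImage (gRel fh) (j '' C) ⊆ j '' C) := by
  have hG : ∀ x y, (j x, j y) ∈ gRel fh → x = y ∨ (x, y) ∈ gRel f :=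
    fun x y h => (had x y).1 (Or.inr h)
  have hexit : ∀ C, IsCompact C → ∀ c ∈ C, ∀ z, (j c, z) ∈ gRel fh → z ∉ range j →
      ∃ w ∉ C, (c, w) ∈ gRel f ∧ (j w, z) ∈ gRel fh := by
    intro C hC c hc z hcz hz
    subst hfh
    obtain ⟨w, hwC, hcw, hwz⟩ := exists_notMem_of_mem_gRel_closure hj hopen hplus hC hc hz hcz
    obtain rfl | hcw := hG c w hcw
    · exact absurd hc hwC
    · exact ⟨w, hwC, hcw, hwz⟩
  refine ⟨fun C hC hunrev => ?_, fun C hC hinv => ?_⟩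
  · rintro z ⟨⟨_, ⟨c₁, hc₁, rfl⟩, h₁⟩, ⟨_, ⟨c₂, hc₂, rfl⟩, h₂⟩⟩
    by_cases hz : z ∈ range j
    · obtain ⟨y, rfl⟩ := hz
      obtain rfl | h₁ := hG c₁ y h₁
      · exact mem_image_of_mem j hc₁
      obtain rfl | h₂ := hG y c₂ h₂
      · exact mem_image_of_mem j hc₂
      exact mem_image_of_mem j (hunrev ⟨⟨c₁, hc₁, h₁⟩, c₂, hc₂, h₂⟩)
    · obtain ⟨w, hwC, hcw, hwz⟩ := hexit C hC c₁ hc₁ z h₁ hz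
      obtain rfl | hwc := hG w c₂ (relTrans_gRel fh _ _ _ hwz h₂)
      · exact absurd hc₂ hwC
      · exact absurd (hunrev ⟨⟨c₁, hc₁, hcw⟩, c₂, hc₂, hwc⟩) hwC
  · rintro z ⟨_, ⟨c, hc, rfl⟩, hcz⟩
    by_cases hz : z ∈ range j
    · obtain ⟨y, rfl⟩ := hz
      obtain rfl | hcy := hG c y hcz
      · exact mem_image_of_mem j hc
      · exact mem_image_of_mem j (hinv ⟨c, hc, hcy⟩)
    · obtain ⟨w, hwC, hcw, -⟩ := hexit C hC c hc z hcz hz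
      exact absurd (hinv ⟨c, hc, hcw⟩) hwC

/-- Let `f` be a +proper closed relation on a locally compact, σ-compact
Hausdorff space `X`, embedded as a dense open subspace of a compact Hausdorff `X̂`,
and let `f̂` be the closure of `f` in `X̂ × X̂`.  If the compactification is almost
dynamic, then: (a) every compact `𝒢f`-unrevisited subset of `X` is `𝒢f̂`-unrevisited;
(b) every compact `𝒢f`-+invariant subset of `X` is `𝒢f̂`-+invariant. -/
theorem almostDynamic_unrevisited_and_invariant
    {X : Type*} [TopologicalSpace X] [LocallyCompactSpace X]
    [SigmaCompactSpace X] [T2Space X]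
    {Xh : Type*} [TopologicalSpace Xh] [CompactSpace Xh] [T2Space Xh]
    (j : X → Xh) (hj : Topology.IsEmbedding j)
    (hopen : IsOpen (Set.range j)) (hdense : Dense (Set.range j))
    (f : Set (X × X)) (hf : IsClosed f)
    (hplus : ∀ A : Set X, IsCompact A → IsCompact (relImage f A))
    (fh : Set (Xh × Xh)) (hfh : fh = closure (Prod.map j j '' f))
    (had : ∀ x y : X,
      ((j x, j y) ∈ Set.diagonal Xh ∪ gRel fh) ↔ ((x, y) ∈ Set.diagonal X ∪ gRel f)) :
    (∀ C : Set X, IsCompact C →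
      relImage (gRel f) C ∩ relImage (relInv (gRel f)) C ⊆ C →
      relImage (gRel fh) (j '' C) ∩ relImage (relInv (gRel fh)) (j '' C) ⊆ j '' C) ∧
    (∀ C : Set X, IsCompact C → relImage (gRel f) C ⊆ C →
      relImage (gRel fh) (j '' C) ⊆ j '' C) :=
  almostDynamic_unrevisited_and_invariant_general j hj hopen f hplus fh hfh had
end

section
/- Let X be a locally compact, σ-compact Hausdorff space and let φ : ℝ≥0 × X → X be a semiflow: φ is continuous, φ(0,x) = x for all x, and φ(t, φ(s,x)) = φ(t+s, x) for all t, s ≥ 0 and all x. Let φ^I = {(x, φ(t,x)) : t ∈ [0,1], x ∈ X} and 𝒢φ = 𝒢(φ^I). Let A be a closed subset of X with 𝒢φ(A) = A and let x₀ ∈ X ∖ A. Then there exists a continuous function L : X → [0,1] such that: L(x₀) = 0; L(y) = 1 for all y ∈ A; L(x) ≤ L(φ(t,x)) for all t ≥ 0 and x ∈ X; and there exists M ≥ 0 with |L(φ(t,x)) − L(x)| ≤ M · t for all t ≥ 0 and x ∈ X. -/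
open NNReal

/-!
`𝒢φ` is a closed preorder on `X` (reflexive because `φ (0, x) = x`) for which `A` is an upper set,
and for small `ε` the lower closure `D` of the compact orbit segment `φ ([0, ε], x₀)` is a closed
lower set disjoint from `A`. An ordered Urysohn lemma in the spirit of Nachbin gives a continuous
`u : X → [0, 1]`, monotone for `𝒢φ`, with `u = 0` on `D` and `u = 1` on `A`. On a compact space
this is Urysohn's dyadic construction run with open lower sets; on `X` one follows a compact
exhaustion, extending from each compact set to the next up to an error `2⁻ⁿ` by averaging monotone
step functions, and passes to the locally uniform limit.

Then `L x = ε⁻¹ ∫₀^ε u (φ (s, x)) ds` is nondecreasing along orbits, vanishes at `x₀` and equals one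
on `A`; flowing for time `t` only shifts the averaging window, so `L` grows by at most `t / ε`.
-/

open Set Topology Filter

section Relations

variable {X : Type*} [TopologicalSpace X]

theorem subset_gRel_s15 (f : Set (X × X)) : f ⊆ gRel f :=
  subset_sInter fun _ hg => hg.1

theorem isClosed_gRel_s15 (f : Set (X × X)) : IsClosed (gRel f) :=
  isClosed_sInter fun _ hg => hg.2.1

theorem relTrans_gRel_s15 (f : Set (X × X)) : RelTrans (gRel f) :=
  fun x y z hxy hyz => mem_sInter.2 fun g hg =>
    hg.2.2 x y z (mem_sInter.1 hxy g hg) (mem_sInter.1 hyz g hg)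

end Relations

section ClosedPreorder

variable {α : Type*} [TopologicalSpace α] [Preorder α] [OrderClosedTopology α]

theorem IsCompact.isClosed_upperClosure {s : Set α} (hs : IsCompact s) :
    IsClosed (upperClosure s : Set α) := by
  have := isCompact_iff_compactSpace.1 hs
  have hsnd : (upperClosure s : Set α) = Prod.snd '' {p : s × α | (p.1 : α) ≤ p.2} := by
    ext y
    simp [mem_upperClosure]
  rw [hsnd]
  exact isClosedMap_snd_of_compactSpace _ (isClosed_le (by fun_prop) continuous_snd)

theorem IsCompact.isClosed_lowerClosure {s : Set α} (hs : IsCompact s) :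
    IsClosed (lowerClosure s : Set α) :=
  IsCompact.isClosed_upperClosure (α := αᵒᵈ) hs

end ClosedPreorder

namespace Urysohns.CU

variable {α : Type*} [TopologicalSpace α] [Preorder α]

theorem monotone_approx (c : CU fun (_ U : Set α) => IsLowerSet U) (n : ℕ) :
    Monotone (c.approx n) := by
  induction n generalizing c with
  | zero =>
    intro x y hxy
    by_cases hy : y ∈ c.U
    · have hx : x ∈ c.U := c.P_C_U hxy hy
      simp [approx, hx, hy]
    · exact (c.approx_le_one 0 x).trans_eq (c.approx_of_notMem_U 0 hy).symm
  | succ n ih =>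
    intro x y hxy
    exact midpoint_le_midpoint (ih c.left hxy) (ih c.right hxy)

theorem monotone_lim (c : CU fun (_ U : Set α) => IsLowerSet U) : Monotone c.lim :=
  fun _ _ hxy => ciSup_mono (c.bddAbove_range_approx _) fun n => c.monotone_approx n hxy

end Urysohns.CU

theorem abs_sum_div_sub_le_of_steps {N : ℕ} (hN : 0 < N) {c : ℝ} (hc : c ∈ Icc (0 : ℝ) 1)
    {v : Fin N → ℝ} (hv : ∀ k, v k ∈ Icc (0 : ℝ) 1)
    (hv1 : ∀ k : Fin N, (k + 1) / N ≤ c → v k = 1) (hv0 : ∀ k : Fin N, c ≤ k / N → v k = 0) :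
    |(∑ k, v k) / N - c| ≤ 1 / N := by
  have hNpos : (0 : ℝ) < N := Nat.cast_pos.2 hN
  -- all steps below `⌊N c⌋` are one and all steps above it are zero
  set j := ⌊N * c⌋₊
  have hj : (j : ℝ) ≤ N * c := Nat.floor_le (by nlinarith [hc.1])
  have hj' : N * c < j + 1 := Nat.lt_floor_add_one _
  have hlow : ∀ k : Fin N, (if (k : ℕ) < j then 1 else 0 : ℝ) ≤ v k := by
    intro k
    split_ifs with hk
    · refine (hv1 k ?_).ge
      rw [div_le_iff₀ hNpos]
      have : ((k : ℕ) + 1 : ℝ) ≤ j := by exact_mod_cast hk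
      linarith
    · exact (hv k).1
  have hupp : ∀ k : Fin N, v k ≤ (if (k : ℕ) < j + 1 then 1 else 0 : ℝ) := by
    intro k
    split_ifs with hk
    · exact (hv k).2
    · refine (hv0 k ?_).le
      rw [le_div_iff₀ hNpos]
      have : (j + 1 : ℝ) ≤ (k : ℕ) := by exact_mod_cast not_lt.1 hk
      linarith
  have hsum_low := Finset.sum_le_sum fun k (_ : k ∈ Finset.univ) => hlow k
  have hsum_upp := Finset.sum_le_sum fun k (_ : k ∈ Finset.univ) => hupp k
  simp only [Finset.sum_boole, Fin.card_filter_val_lt] at hsum_low hsum_upp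
  have h1 : N * c - 1 ≤ ((min N j : ℕ) : ℝ) := by
    rcases min_choice N j with h | h <;> rw [h] <;> nlinarith [hc.2]
  have h2 : ((min N (j + 1) : ℕ) : ℝ) ≤ j + 1 := by exact_mod_cast min_le_right _ _
  have hdiff : |∑ k, v k - N * c| ≤ 1 := abs_le.2 ⟨by linarith, by linarith⟩
  rw [show (∑ k, v k) / N - c = (∑ k, v k - N * c) / N by field_simp, abs_div,
    abs_of_pos hNpos]
  exact div_le_div_of_nonneg_right hdiff hNpos.le

section CompactSpace

variable {α : Type*} [TopologicalSpace α] [Preorder α] [OrderClosedTopology α] [CompactSpace α]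
  [T2Space α]

theorem exists_isOpen_isLowerSet_between {c u : Set α} (hc : IsClosed c) (hu : IsOpen u)
    (hul : IsLowerSet u) (hcu : c ⊆ u) :
    ∃ v, IsOpen v ∧ c ⊆ v ∧ closure v ⊆ u ∧ IsLowerSet v := by
  have hcl : (lowerClosure c : Set α) ⊆ u := fun x ⟨y, hy, hxy⟩ => hul hxy (hcu hy)
  obtain ⟨w, hw, hcw, hwu⟩ :=
    normal_exists_closure_subset hc.isCompact.isClosed_lowerClosure hu hcl
  -- the largest lower set inside `w`
  have hvw : (upperClosure wᶜ : Set α)ᶜ ⊆ w := compl_subset_comm.1 subset_upperClosure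
  exact ⟨(upperClosure wᶜ : Set α)ᶜ,
    hw.isClosed_compl.isCompact.isClosed_upperClosure.isOpen_compl,
    fun x hx ⟨y, hy, hyx⟩ => hy (hcw ⟨x, hx, hyx⟩), (closure_mono hvw).trans hwu,
    (upperClosure wᶜ).upper.compl⟩

theorem exists_continuous_monotone_zero_one_of_isClosed {s t : Set α} (hs : IsClosed s)
    (ht : IsClosed t) (hd : Disjoint (lowerClosure s : Set α) (upperClosure t)) :
    ∃ f : C(α, ℝ), Monotone f ∧ EqOn f 0 s ∧ EqOn f 1 t ∧ ∀ x, f x ∈ Icc (0 : ℝ) 1 := by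
  let c : Urysohns.CU fun (_ U : Set α) => IsLowerSet U :=
    { C := lowerClosure s
      U := (upperClosure t : Set α)ᶜ
      P_C_U := (upperClosure t).upper.compl
      closed_C := hs.isCompact.isClosed_lowerClosure
      open_U := ht.isCompact.isClosed_upperClosure.isOpen_compl
      subset := hd.subset_compl_right
      hP := fun hc hul hu hcu => (exists_isOpen_isLowerSet_between hc hu hul hcu).imp
        fun _ hv => ⟨hv.1, hv.2.1, hv.2.2.1, hv.2.2.2, hul⟩ }
  refine ⟨⟨c.lim, c.continuous_lim⟩, c.monotone_lim, fun x hx => c.lim_of_mem_C x ?_,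
    fun x hx => c.lim_of_notMem_U x ?_, c.lim_mem_Icc⟩
  · exact subset_lowerClosure hx
  · exact not_not_intro (subset_upperClosure hx)

theorem MonotoneOn.exists_continuous_monotone_step {S : Set α} {g : α → ℝ}
    (hg : MonotoneOn g S) (hgc : ContinuousOn g S) (hS : IsClosed S) {a b : ℝ} (hab : a < b) :
    ∃ f : C(α, ℝ), Monotone f ∧ (∀ x, f x ∈ Icc (0 : ℝ) 1) ∧
      (∀ x ∈ S, g x ≤ a → f x = 0) ∧ ∀ x ∈ S, b ≤ g x → f x = 1 := by
  have hd : Disjoint (lowerClosure (S ∩ g ⁻¹' Iic a) : Set α)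
      (upperClosure (S ∩ g ⁻¹' Ici b)) := by
    refine Set.disjoint_left.2 fun z ⟨y, ⟨hyS, hya⟩, hzy⟩ ⟨x, ⟨hxS, hxb⟩, hxz⟩ => ?_
    have : g x ≤ g y := hg hxS hyS (hxz.trans hzy)
    exact hab.not_ge ((mem_Ici.1 hxb).trans (this.trans hya))
  obtain ⟨f, hfm, hf0, hf1, hf01⟩ := exists_continuous_monotone_zero_one_of_isClosed
    (hgc.preimage_isClosed_of_isClosed hS isClosed_Iic)
    (hgc.preimage_isClosed_of_isClosed hS isClosed_Ici) hd
  exact ⟨f, hfm, hf01, fun x hx hxa => hf0 ⟨hx, hxa⟩, fun x hx hxb => hf1 ⟨hx, hxb⟩⟩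

theorem MonotoneOn.exists_continuous_monotone_approx {S : Set α} {g : α → ℝ}
    (hg : MonotoneOn g S) (hgc : ContinuousOn g S) (hS : IsClosed S)
    (hg01 : MapsTo g S (Icc 0 1)) {N : ℕ} (hN : 0 < N) :
    ∃ G : C(α, ℝ), Monotone G ∧ (∀ x, G x ∈ Icc (0 : ℝ) 1) ∧ ∀ x ∈ S,
      |G x - g x| ≤ 1 / N ∧ (g x = 0 → G x = 0) ∧ (g x = 1 → G x = 1) := by
  have hNpos : (0 : ℝ) < N := Nat.cast_pos.2 hN
  choose f hfm hf01 hf0 hf1 using fun k : Fin N =>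
    hg.exists_continuous_monotone_step hgc hS (a := k / N) (b := (k + 1) / N)
      (div_lt_div_of_pos_right (lt_add_one _) hNpos)
  have hsum_le : ∀ x, ∑ k, f k x ≤ N := fun x =>
    (Finset.sum_le_card_nsmul _ _ 1 fun k _ => (hf01 k x).2).trans_eq (by simp)
  refine ⟨⟨fun x => (∑ k, f k x) / N, by fun_prop⟩, fun x y hxy => ?_, fun x => ?_,
    fun x hx => ⟨?_, fun h0 => ?_, fun h1 => ?_⟩⟩
  · exact div_le_div_of_nonneg_right (Finset.sum_le_sum fun k _ => hfm k hxy) hNpos.le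
  · exact ⟨div_nonneg (Finset.sum_nonneg fun k _ => (hf01 k x).1) hNpos.le,
      (div_le_one hNpos).2 (hsum_le x)⟩
  · exact abs_sum_div_sub_le_of_steps hN (hg01 hx) (fun k => hf01 k x)
      (fun k hk => hf1 k x hx hk) (fun k hk => hf0 k x hx hk)
  · have : ∀ k, f k x = 0 := fun k => hf0 k x hx (h0.trans_le (by positivity))
    simp [this]
  · have hk : ∀ k : Fin N, ((k : ℝ) + 1) / N ≤ g x := fun k => by
      rw [h1, div_le_one hNpos]
      exact_mod_cast k.isLt
    have : ∀ k, f k x = 1 := fun k => hf1 k x hx (hk k)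
    simp [this, hNpos.ne']

end CompactSpace

section OrderedSpace

variable {X : Type*} [TopologicalSpace X] [Preorder X]

theorem IsCompact.exists_continuous_monotoneOn_approx [NormalSpace X] [T2Space X]
    [OrderClosedTopology X] {K S : Set X} (hK : IsCompact K) (hSK : S ⊆ K) (hS : IsClosed S)
    {g : X → ℝ} (hg : MonotoneOn g S) (hgc : ContinuousOn g S) (hg01 : MapsTo g S (Icc 0 1))
    {N : ℕ} (hN : 0 < N) :
    ∃ G : C(X, ℝ), MonotoneOn G K ∧ MapsTo G K (Icc 0 1) ∧ ∀ x ∈ S,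
      |G x - g x| ≤ 1 / N ∧ (g x = 0 → G x = 0) ∧ (g x = 1 → G x = 1) := by
  have := isCompact_iff_compactSpace.1 hK
  obtain ⟨G₀, hG₀m, hG₀01, hG₀S⟩ :=
    MonotoneOn.exists_continuous_monotone_approx (S := ((↑) : K → X) ⁻¹' S) (g := g ∘ (↑))
      (fun _ ha _ hb hab => hg ha hb hab)
      (hgc.comp continuous_subtype_val.continuousOn fun _ ha => ha)
      (hS.preimage continuous_subtype_val) (fun _ ha => hg01 ha) hN
  obtain ⟨G, hG⟩ := G₀.exists_restrict_eq hK.isClosed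
  have hGK : ∀ x (hx : x ∈ K), G x = G₀ ⟨x, hx⟩ := fun x hx => DFunLike.congr_fun hG ⟨x, hx⟩
  refine ⟨G, fun x hx y hy hxy => ?_, fun x hx => ?_, fun x hx => ?_⟩
  · rw [hGK x hx, hGK y hy]
    exact hG₀m (show (⟨x, hx⟩ : K) ≤ ⟨y, hy⟩ from hxy)
  · rw [hGK x hx]
    exact hG₀01 _
  · rw [hGK x (hSK hx)]
    exact hG₀S ⟨x, hSK hx⟩ hx

def MonotoneSeparatesOn (D E T : Set X) (F : X → ℝ) : Prop :=
  MonotoneOn F T ∧ MapsTo F T (Icc 0 1) ∧ EqOn F 0 (D ∩ T) ∧ EqOn F 1 (E ∩ T)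

theorem MonotoneSeparatesOn.exists_extension {D E T : Set X} {F : X → ℝ}
    (hF : MonotoneSeparatesOn D E T F) (hFc : ContinuousOn F T) (hT : IsClosed T)
    (hD : IsClosed D) (hDl : IsLowerSet D) (hE : IsClosed E) (hEu : IsUpperSet E)
    (hDE : Disjoint D E) :
    ∃ g : X → ℝ, EqOn g F T ∧ ContinuousOn g (T ∪ D ∪ E) ∧
      MonotoneSeparatesOn D E (T ∪ D ∪ E) g := by
  classical
  obtain ⟨hFm, hF01, hF0, hF1⟩ := hF
  let g : X → ℝ := fun x => if x ∈ E then 1 else if x ∈ D then 0 else F x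
  have hgD : EqOn g 0 D := fun x hx => by simp [g, hx, hDE.notMem_of_mem_left hx]
  have hgE : EqOn g 1 E := fun x hx => by simp [g, hx]
  have hgF : EqOn g F T := fun x hx => by
    by_cases hxE : x ∈ E
    · simp [g, hxE, hF1 ⟨hxE, hx⟩]
    by_cases hxD : x ∈ D
    · simp [g, hxE, hxD, hF0 ⟨hxD, hx⟩]
    simp [g, hxE, hxD]
  have hg01 : MapsTo g (T ∪ D ∪ E) (Icc 0 1) := by
    rintro x ((hx | hx) | hx)
    · exact hgF hx ▸ hF01 hx
    · simp [hgD hx]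
    · simp [hgE hx]
  refine ⟨g, hgF, ?_, ?_, hg01, fun x hx => hgD hx.1, fun x hx => hgE hx.1⟩
  · exact ((hFc.congr hgF).union_of_isClosed (continuousOn_const.congr hgD) hT hD)
      |>.union_of_isClosed (continuousOn_const.congr hgE) (hT.union hD) hE
  · intro x hx y hy hxy
    by_cases hyE : y ∈ E
    · exact hgE hyE ▸ (hg01 hx).2
    by_cases hxD : x ∈ D
    · exact hgD hxD ▸ (hg01 hy).1
    have hxT : x ∈ T := by
      rcases hx with (hx | hx) | hx
      exacts [hx, absurd hx hxD, absurd (hEu hxy hx) hyE]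
    have hyT : y ∈ T := by
      rcases hy with (hy | hy) | hy
      exacts [hy, absurd (hDl hxy hy) hxD, absurd hy hyE]
    rw [hgF hxT, hgF hyT]
    exact hFm hxT hyT hxy

theorem MonotoneSeparatesOn.exists_continuous_approx [NormalSpace X] [T2Space X]
    [OrderClosedTopology X] {D E T L : Set X} {F : X → ℝ} (hF : MonotoneSeparatesOn D E T F)
    (hFc : ContinuousOn F T) (hT : IsClosed T) (hL : IsCompact L) (hTL : T ⊆ L)
    (hD : IsClosed D) (hDl : IsLowerSet D) (hE : IsClosed E) (hEu : IsUpperSet E)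
    (hDE : Disjoint D E) {N : ℕ} (hN : 0 < N) :
    ∃ G : C(X, ℝ), MonotoneSeparatesOn D E L G ∧ ∀ x ∈ T, |G x - F x| ≤ 1 / N := by
  obtain ⟨g, hgF, hgc, hgm, hg01, hg0, hg1⟩ := hF.exists_extension hFc hT hD hDl hE hEu hDE
  have hS : T ∪ (D ∪ E) ∩ L ⊆ T ∪ D ∪ E := by
    rintro x (hx | ⟨hx | hx, -⟩) <;> simp [hx]
  obtain ⟨G, hGm, hG01, hGg⟩ := hL.exists_continuous_monotoneOn_approx
    (union_subset hTL inter_subset_right) (hT.union ((hD.union hE).inter hL.isClosed))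
    (hgm.mono hS) (hgc.mono hS) (hg01.mono_left hS) hN
  refine ⟨G, ⟨hGm, hG01, fun x hx => ?_, fun x hx => ?_⟩, fun x hx => ?_⟩
  · exact (hGg x (Or.inr ⟨Or.inl hx.1, hx.2⟩)).2.1 (hg0 ⟨hx.1, Or.inl (Or.inr hx.1)⟩)
  · exact (hGg x (Or.inr ⟨Or.inr hx.1, hx.2⟩)).2.2 (hg1 ⟨hx.1, Or.inr hx.1⟩)
  · simpa [hgF hx] using (hGg x (Or.inl hx)).1

theorem MonotoneSeparatesOn.of_tendsto {D E : Set X} (K : CompactExhaustion X)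
    {F : ℕ → X → ℝ} (hF : ∀ n, MonotoneSeparatesOn D E (K n) (F n)) {u : X → ℝ}
    (hu : ∀ x, Tendsto (F · x) atTop (𝓝 (u x))) : MonotoneSeparatesOn D E univ u := by
  have hev : ∀ x, ∀ᶠ n in atTop, x ∈ K n := fun x =>
    eventually_atTop.2 ⟨K.find x, fun n hn => K.mem_iff_find_le.2 hn⟩
  refine ⟨fun x _ y _ hxy => ?_, fun x _ => ?_, fun x hx => ?_, fun x hx => ?_⟩
  · refine le_of_tendsto_of_tendsto (hu x) (hu y) ?_
    filter_upwards [hev x, hev y] with n hxn hyn using (hF n).1 hxn hyn hxy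
  · refine isClosed_Icc.mem_of_tendsto (hu x) ?_
    filter_upwards [hev x] with n hn using (hF n).2.1 hn
  · refine isClosed_singleton.mem_of_tendsto (hu x) ?_
    filter_upwards [hev x] with n hn using (hF n).2.2.1 ⟨hx.1, hn⟩
  · refine isClosed_singleton.mem_of_tendsto (hu x) ?_
    filter_upwards [hev x] with n hn using (hF n).2.2.2 ⟨hx.1, hn⟩

end OrderedSpace

theorem CompactExhaustion.exists_continuous_tendsto {X Y : Type*} [TopologicalSpace X]
    [PseudoMetricSpace Y] [CompleteSpace Y] (K : CompactExhaustion X) {F : ℕ → X → Y}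
    (hF : ∀ n, Continuous (F n))
    (hstep : ∀ n, ∀ x ∈ K n, dist (F n x) (F (n + 1) x) ≤ (1 / 2) ^ n) :
    ∃ u : X → Y, Continuous u ∧ ∀ x, Tendsto (F · x) atTop (𝓝 (u x)) := by
  -- freezing the sequence at `x` until `x ∈ K n` makes the geometric bound hold from the start
  let a : X → ℕ → Y := fun x n => F (max n (K.find x)) x
  have ha : ∀ x n, dist (a x n) (a x (n + 1)) ≤ 1 * (1 / 2) ^ n := fun x n => by
    rcases lt_or_ge n (K.find x) with hn | hn
    · simp [a, max_eq_right hn.le, max_eq_right (Nat.succ_le_of_lt hn)]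
    · simpa [a, max_eq_left hn, max_eq_left (hn.trans n.le_succ)] using
        hstep n x (K.mem_iff_find_le.2 hn)
  choose u hu using fun x => cauchySeq_tendsto_of_complete
    (cauchySeq_of_le_geometric (1 / 2) 1 (by norm_num) (ha x))
  have hdist : ∀ x n, K.find x ≤ n → dist (F n x) (u x) ≤ 2 * (1 / 2) ^ n := fun x n hn => by
    have := dist_le_of_le_geometric_of_tendsto (1 / 2) 1 (by norm_num) (ha x) (hu x) n
    simp only [a, max_eq_left hn] at this
    exact this.trans_eq (by ring)
  have hlim : ∀ x, Tendsto (F · x) atTop (𝓝 (u x)) := fun x =>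
    (hu x).congr' (eventually_atTop.2 ⟨K.find x, fun n hn => by simp [a, max_eq_left hn]⟩)
  refine ⟨u, TendstoLocallyUniformly.continuous (p := atTop) ?_
    (Frequently.of_forall hF), hlim⟩
  refine Metric.tendstoLocallyUniformly_iff.2 fun ε hε x => ⟨K (K.find x + 1),
    mem_interior_iff_mem_nhds.1 (K.subset_interior_succ _ (K.mem_find x)), ?_⟩
  have hsmall : ∀ᶠ n in atTop, 2 * (1 / 2 : ℝ) ^ n < ε :=
    ((_root_.tendsto_pow_atTop_nhds_zero_of_lt_one (by norm_num) (by norm_num)).const_mul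
      2).eventually (gt_mem_nhds (by simpa using hε))
  filter_upwards [hsmall, eventually_ge_atTop (K.find x + 1)] with n hn hxn
  intro y hy
  rw [dist_comm]
  exact (hdist y n ((K.mem_iff_find_le.1 hy).trans hxn)).trans_lt hn

theorem exists_continuous_monotone_zero_one_of_sigmaCompactSpace {X : Type*}
    [TopologicalSpace X] [LocallyCompactSpace X] [SigmaCompactSpace X] [T2Space X] [Preorder X]
    [OrderClosedTopology X] {D E : Set X} (hD : IsClosed D) (hDl : IsLowerSet D)
    (hE : IsClosed E) (hEu : IsUpperSet E) (hDE : Disjoint D E) :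
    ∃ u : C(X, ℝ), Monotone u ∧ EqOn u 0 D ∧ EqOn u 1 E ∧ ∀ x, u x ∈ Icc (0 : ℝ) 1 := by
  let K := CompactExhaustion.choice X
  have happrox : ∀ {T L : Set X} {F : X → ℝ}, IsClosed T → IsCompact L → T ⊆ L →
      MonotoneSeparatesOn D E T F → ContinuousOn F T → ∀ {N : ℕ}, 0 < N →
      ∃ G : C(X, ℝ), MonotoneSeparatesOn D E L G ∧ ∀ x ∈ T, |G x - F x| ≤ 1 / N :=
    fun hT hL hTL hF hFc _ hN => hF.exists_continuous_approx hFc hT hL hTL hD hDl hE hEu hDE hN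
  obtain ⟨F₀, hF₀, -⟩ := happrox (T := ∅) (F := 0) isClosed_empty (K.isCompact 0)
    (empty_subset _) ⟨fun _ h => h.elim, fun _ h => h.elim, by simp, by simp⟩
    (continuousOn_empty _) one_pos
  have hnext : ∀ n (F : C(X, ℝ)), ∃ G : C(X, ℝ), MonotoneSeparatesOn D E (K n) F →
      MonotoneSeparatesOn D E (K (n + 1)) G ∧ ∀ x ∈ K n, dist (F x) (G x) ≤ (1 / 2) ^ n := by
    intro n F
    by_cases hF : MonotoneSeparatesOn D E (K n) F
    · obtain ⟨G, hG, hGF⟩ := happrox (K.isCompact n).isClosed (K.isCompact (n + 1))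
        (K.subset_succ n) hF F.continuous.continuousOn (N := 2 ^ n) (by positivity)
      refine ⟨G, fun _ => ⟨hG, fun x hx => ?_⟩⟩
      simpa [Real.dist_eq, abs_sub_comm] using hGF x hx
    · exact ⟨F, fun h => absurd h hF⟩
  choose next hnext using hnext
  let F : ℕ → C(X, ℝ) := fun n => Nat.rec F₀ next n
  have hFsep : ∀ n, MonotoneSeparatesOn D E (K n) (F n) := fun n => by
    induction n with
    | zero => exact hF₀
    | succ n ih => exact (hnext n (F n) ih).1
  obtain ⟨u, huc, hu⟩ := K.exists_continuous_tendsto (F := fun n => F n)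
    (fun n => (F n).continuous) fun n => (hnext n (F n) (hFsep n)).2
  obtain ⟨hum, hu01, hu0, hu1⟩ := MonotoneSeparatesOn.of_tendsto K hFsep hu
  exact ⟨⟨u, huc⟩, monotoneOn_univ.1 hum, by simpa using hu0, by simpa using hu1,
    fun x => hu01 (mem_univ x)⟩

section Semiflow

theorem NNReal.forall_of_forall_le_one_of_add {P : ℝ≥0 → Prop} (h : ∀ t ≤ 1, P t)
    (hadd : ∀ s t, P s → P t → P (s + t)) (t : ℝ≥0) : P t := by
  obtain ⟨n, hn⟩ := exists_nat_ge t
  have hpos : (0 : ℝ≥0) < n + 1 := by positivity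
  have hstep : t / (n + 1) ≤ 1 :=
    (div_le_one hpos).2 (hn.trans (le_add_of_nonneg_right zero_le_one))
  have hk : ∀ k : ℕ, P (k * (t / (n + 1))) := fun k => by
    induction k with
    | zero => simpa using h 0 zero_le_one
    | succ k ih => simpa [add_mul] using hadd _ _ ih (h _ hstep)
  simpa [mul_div_cancel₀ _ hpos.ne'] using hk (n + 1)

theorem ContinuousAt.exists_pos_forall_le_mem {Y : Type*} [TopologicalSpace Y] {f : ℝ≥0 → Y}
    (hf : ContinuousAt f 0) {U : Set Y} (hU : IsOpen U) (h0 : f 0 ∈ U) :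
    ∃ ε : ℝ≥0, 0 < ε ∧ ∀ t ≤ ε, f t ∈ U :=
  (nhds_bot_basis_Iic (α := ℝ≥0)).eventually_iff.1 (hf.eventually_mem (hU.mem_nhds h0))

variable {X : Type*} {φ : ℝ≥0 × X → X}

theorem RelTrans.semiflow_mem (hφadd : ∀ (t s : ℝ≥0) (x : X), φ (t, φ (s, x)) = φ (t + s, x))
    {R : Set (X × X)} (hR : RelTrans R) (h : ∀ t ≤ 1, ∀ x, (x, φ (t, x)) ∈ R) (t : ℝ≥0)
    (x : X) : (x, φ (t, x)) ∈ R :=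
  NNReal.forall_of_forall_le_one_of_add (P := fun t => ∀ x, (x, φ (t, x)) ∈ R) h
    (fun s t hs ht x => by simpa [hφadd, add_comm] using hR _ _ _ (hs x) (ht (φ (s, x)))) t x

variable [TopologicalSpace X]

noncomputable def flowAverage (φ : ℝ≥0 × X → X) (u : X → ℝ) (ε : ℝ≥0) (x : X) : ℝ :=
  (∫ s in (0 : ℝ)..ε, u (φ (s.toNNReal, x))) / ε

variable {u : X → ℝ} {ε : ℝ≥0}

theorem continuous_flowAverage (hφ : Continuous φ) (hu : Continuous u) :
    Continuous (flowAverage φ u ε) :=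
  (intervalIntegral.continuous_parametric_intervalIntegral_of_continuous' (by fun_prop) _
    _).div_const _

theorem intervalIntegrable_flow (hφ : Continuous φ) (hu : Continuous u) (x : X) (a b : ℝ) :
    IntervalIntegrable (fun s : ℝ => u (φ (s.toNNReal, x))) MeasureTheory.volume a b :=
  (by fun_prop : Continuous fun s : ℝ => u (φ (s.toNNReal, x))).intervalIntegrable a b

theorem flowAverage_mem_Icc (hφ : Continuous φ) (hu : Continuous u) (hε : 0 < ε) {x : X}
    {a b : ℝ} (h : ∀ t ≤ ε, u (φ (t, x)) ∈ Icc a b) : flowAverage φ u ε x ∈ Icc a b := by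
  have hε' : (0 : ℝ) < ε := hε
  have hmem : ∀ s ∈ Icc (0 : ℝ) ε, u (φ (s.toNNReal, x)) ∈ Icc a b := fun s hs =>
    h _ (Real.toNNReal_le_iff_le_coe.2 hs.2)
  have hint := intervalIntegrable_flow hφ hu x 0 ε
  constructor
  · rw [flowAverage, le_div_iff₀ hε']
    have := intervalIntegral.integral_mono_on hε'.le intervalIntegrable_const hint
      fun s hs => (hmem s hs).1
    simpa [mul_comm] using this
  · rw [flowAverage, div_le_iff₀ hε']
    have := intervalIntegral.integral_mono_on hε'.le hint intervalIntegrable_const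
      fun s hs => (hmem s hs).2
    simpa [mul_comm] using this

theorem flowAverage_eq (hφ : Continuous φ) (hu : Continuous u) (hε : 0 < ε) {x : X} {c : ℝ}
    (h : ∀ t ≤ ε, u (φ (t, x)) = c) : flowAverage φ u ε x = c := by
  simpa using flowAverage_mem_Icc hφ hu hε (a := c) (b := c) fun t ht => by simp [h t ht]

theorem flowAverage_le_flowAverage (hφ : Continuous φ) (hu : Continuous u)
    (hφadd : ∀ (t s : ℝ≥0) (x : X), φ (t, φ (s, x)) = φ (t + s, x))
    (hmono : ∀ t x, u x ≤ u (φ (t, x))) (t : ℝ≥0) (x : X) :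
    flowAverage φ u ε x ≤ flowAverage φ u ε (φ (t, x)) := by
  refine div_le_div_of_nonneg_right (intervalIntegral.integral_mono_on ε.coe_nonneg
    (intervalIntegrable_flow hφ hu _ _ _) (intervalIntegrable_flow hφ hu _ _ _) fun s _ => ?_)
    ε.coe_nonneg
  rw [hφadd, add_comm, ← hφadd]
  exact hmono t _

theorem flowAverage_flow_sub_le (hφ : Continuous φ) (hu : Continuous u)
    (hφadd : ∀ (t s : ℝ≥0) (x : X), φ (t, φ (s, x)) = φ (t + s, x))
    (hu01 : ∀ x, u x ∈ Icc (0 : ℝ) 1) (t : ℝ≥0) (x : X) :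
    flowAverage φ u ε (φ (t, x)) - flowAverage φ u ε x ≤ t / ε := by
  set w : ℝ → ℝ := fun s => u (φ (s.toNNReal, x))
  have hw := intervalIntegrable_flow hφ hu x
  have hshift : ∫ s in (0 : ℝ)..ε, u (φ (s.toNNReal, φ (t, x))) = ∫ s in (t : ℝ)..ε + t, w s := by
    refine (intervalIntegral.integral_congr fun s hs => ?_).trans
      ((intervalIntegral.integral_comp_add_right w t).trans (by rw [zero_add]))
    have hs0 : 0 ≤ s := by simpa [ε.coe_nonneg] using hs.1
    simp [w, hφadd, Real.toNNReal_add hs0 t.coe_nonneg]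
  have hend : ∫ s in (ε : ℝ)..ε + t, w s ≤ t := by
    have := intervalIntegral.integral_mono_on
      (le_add_of_nonneg_right t.coe_nonneg : (ε : ℝ) ≤ ε + t) (hw _ _) intervalIntegrable_const
      fun s _ => (hu01 _).2
    simpa using this
  have hstart : 0 ≤ ∫ s in (0 : ℝ)..t, w s :=
    intervalIntegral.integral_nonneg t.coe_nonneg fun s _ => (hu01 _).1
  rw [flowAverage, flowAverage, div_sub_div_same, hshift,
    intervalIntegral.integral_interval_sub_interval_comm' (hw _ _) (hw _ _) (hw _ _)]
  exact div_le_div_of_nonneg_right (by linarith) ε.coe_nonneg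

end Semiflow

/-- Let `φ` be a semiflow on a locally compact, σ-compact Hausdorff
space `X`, let `𝒢φ = 𝒢(φ^I)` where `φ^I = {(x, φ(t,x)) : 0 ≤ t ≤ 1}`, let `A` be a
closed set with `𝒢φ(A) = A` and `x₀ ∉ A`.  Then there is a φ-Lipschitz Lyapunov
function `L : X → [0,1]` for `φ` with `L(x₀) = 0` and `L = 1` on `A`. -/
theorem semiflow_lipschitz_lyapunov
    {X : Type*} [TopologicalSpace X] [LocallyCompactSpace X]
    [SigmaCompactSpace X] [T2Space X]
    (φ : ℝ≥0 × X → X) (hφc : Continuous φ)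
    (hφ0 : ∀ x : X, φ (0, x) = x)
    (hφadd : ∀ (t s : ℝ≥0) (x : X), φ (t, φ (s, x)) = φ (t + s, x))
    (A : Set X) (hA : IsClosed A)
    (hAinv : relImage
      (gRel {p : X × X | ∃ t : ℝ≥0, t ≤ 1 ∧ p.2 = φ (t, p.1)}) A = A)
    (x₀ : X) (hx₀ : x₀ ∉ A) :
    ∃ L : X → ℝ, Continuous L ∧ (∀ x : X, L x ∈ Set.Icc (0:ℝ) 1) ∧
      L x₀ = 0 ∧ (∀ y ∈ A, L y = 1) ∧
      (∀ (t : ℝ≥0) (x : X), L x ≤ L (φ (t, x))) ∧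
      (∃ M : ℝ, 0 ≤ M ∧ ∀ (t : ℝ≥0) (x : X), |L (φ (t, x)) - L x| ≤ M * (t : ℝ)) := by
  set R := gRel {p : X × X | ∃ t : ℝ≥0, t ≤ 1 ∧ p.2 = φ (t, p.1)}
  have hflow : ∀ t x, (x, φ (t, x)) ∈ R :=
    (relTrans_gRel_s15 _).semiflow_mem hφadd fun t ht x => subset_gRel_s15 _ ⟨t, ht, rfl⟩
  let _ : Preorder X :=
    { le := fun x y => (x, y) ∈ R
      le_refl := fun x => by simpa [hφ0] using hflow 0 x
      le_trans := relTrans_gRel_s15 _ }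
  have _ : OrderClosedTopology X := ⟨isClosed_gRel_s15 _⟩
  have hAu : IsUpperSet A := fun a b hab ha => hAinv ▸ ⟨a, ha, hab⟩
  obtain ⟨ε, hε, hεA⟩ := (hφc.comp (Continuous.prodMk_left x₀)).continuousAt
    |>.exists_pos_forall_le_mem hA.isOpen_compl (by simpa [hφ0] using hx₀)
  have hΓ : IsCompact ((fun t => φ (t, x₀)) '' Icc 0 ε) := isCompact_Icc.image (by fun_prop)
  obtain ⟨u, hum, hu0, hu1, hu01⟩ := exists_continuous_monotone_zero_one_of_sigmaCompactSpace
    hΓ.isClosed_lowerClosure (lowerClosure _).lower hA hAu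
    (Set.disjoint_right.2 fun y hy ⟨_, ⟨t, ht, rfl⟩, hyγ⟩ => hεA t ht.2 (hAu hyγ hy))
  have humono : ∀ t x, u x ≤ u (φ (t, x)) := fun t x => hum (hflow t x)
  have hu := u.continuous
  refine ⟨flowAverage φ u ε, continuous_flowAverage hφc hu,
    fun x => flowAverage_mem_Icc hφc hu hε fun t _ => hu01 _,
    flowAverage_eq hφc hu hε fun t ht => hu0 (subset_lowerClosure ⟨t, ⟨zero_le, ht⟩, rfl⟩),
    fun y hy => flowAverage_eq hφc hu hε fun t _ => hu1 (hAu (hflow t y) hy),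
    flowAverage_le_flowAverage hφc hu hφadd humono, 1 / ε, by positivity, fun t x => ?_⟩
  rw [abs_of_nonneg (sub_nonneg.2 (flowAverage_le_flowAverage hφc hu hφadd humono t x)),
    one_div_mul_eq_div]
  exact flowAverage_flow_sub_le hφc hu hφadd hu01 t x
end
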